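/- arXiv:1602.00284 — 7 statements merged into one kernel-verified Lean document; each statement's English description precedes it below -/
import Mathlib

section
/- If -1 and 2 are squares in a field F of characteristic zero with quadratic extension K = F(√d), then for every n there exists X ∈ GL(n,K) such that X*X = S, where S is the anti-diagonal permutation matrix with Sᵢⱼ = δ_{i,n+1-j}. -/
/-!
If `i² = -1` in `F`, then `X = ((1 - i)/2) • 1 + ((1 + i)/2) • S` is a symmetric square root of the
anti-diagonal matrix `S`: since `S² = 1`, `X² = (a² + b²) • 1 + 2ab • S` for `a = (1 - i)/2`,
`b = (1 + i)/2`, and `a² + b² = 0`, `2ab = 1`. Its entries lie in `F`, so conjugation fixes it and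
`X*X = XᵀX = X² = S`; and `det X` is a unit because `(det X)² = det S = ±1`.
-/

open Matrix

theorem Matrix.transpose_mul_self_smul_one_add_smul {R n : Type*} [CommRing R] [Fintype n]
    [DecidableEq n] {P : Matrix n n R} (hPt : Pᵀ = P) (hPP : P * P = 1) {a b : R}
    (hab : a * a + b * b = 0) (hab' : 2 * a * b = 1) :
    (a • 1 + b • P)ᵀ * (a • 1 + b • P) = P := by
  rw [transpose_add, transpose_smul, transpose_smul, transpose_one, hPt]
  simp only [add_mul, mul_add, smul_mul_smul_comm, one_mul, mul_one, hPP]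
  linear_combination (norm := module) hab • (1 : Matrix n n R) + hab' • P

theorem Matrix.isUnit_det_of_transpose_mul_self_eq {R n : Type*} [CommRing R] [Fintype n]
    [DecidableEq n] {X P : Matrix n n R} (hX : Xᵀ * X = P) (hPP : P * P = 1) : IsUnit X.det :=
  isUnit_det_of_left_inverse (B := P * Xᵀ) (by rw [mul_assoc, hX, hPP])

theorem Matrix.map_map_algebraMap_of_algHomClass {F K L A m n : Type*} [CommSemiring F]
    [Semiring K] [Semiring L] [Algebra F K] [Algebra F L] [FunLike A K L] [AlgHomClass A F K L]
    (σ : A) (X : Matrix m n F) :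
    (X.map (algebraMap F K)).map σ = X.map (algebraMap F L) := by
  ext i j
  exact AlgHomClass.commutes σ (X i j)

namespace Fin

theorem revPerm_mul_self (n : ℕ) : (revPerm : Equiv.Perm (Fin n)) * revPerm = 1 :=
  Equiv.ext rev_rev

theorem transpose_revPerm_permMatrix (R : Type*) [Zero R] [One R] (n : ℕ) :
    ((revPerm : Equiv.Perm (Fin n)).permMatrix R)ᵀ = revPerm.permMatrix R := by
  rw [transpose_permMatrix, Equiv.Perm.inv_def, revPerm_symm]

theorem revPerm_permMatrix_mul_self (R : Type*) [Semiring R] (n : ℕ) :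
    (revPerm : Equiv.Perm (Fin n)).permMatrix R * revPerm.permMatrix R = 1 := by
  rw [← permMatrix_mul, revPerm_mul_self, permMatrix_one]

theorem revPerm_permMatrix_eq (R : Type*) [Zero R] [One R] (n : ℕ) :
    (revPerm : Equiv.Perm (Fin n)).permMatrix R =
      Matrix.of (fun i j : Fin n => if (i : ℕ) + (j : ℕ) + 1 = n then 1 else 0) := by
  ext i j
  simp only [PEquiv.toMatrix_apply, Equiv.toPEquiv_apply, Option.mem_def, Option.some.injEq,
    of_apply, revPerm_apply, Fin.ext_iff, val_rev]
  congr 1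
  exact propext ⟨fun h => by omega, fun h => by omega⟩

end Fin

theorem stmt2_general (F K : Type*) [Field F] [Field K] [CharZero F] [Algebra F K]
    (σ : K ≃ₐ[F] K)
    (h1 : IsSquare (-1 : F)) (n : ℕ) :
    ∃ X : Matrix (Fin n) (Fin n) K, IsUnit X.det ∧
      (X.map σ)ᵀ * X =
        Matrix.of (fun i j : Fin n => if (i : ℕ) + (j : ℕ) + 1 = n then (1 : K) else 0) := by
  obtain ⟨r, hr⟩ := h1
  set S := (Fin.revPerm : Equiv.Perm (Fin n)).permMatrix F
  set X := ((1 - r) / 2) • (1 : Matrix (Fin n) (Fin n) F) + ((1 + r) / 2) • S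
  have hX : Xᵀ * X = S :=
    transpose_mul_self_smul_one_add_smul (Fin.transpose_revPerm_permMatrix F n)
      (Fin.revPerm_permMatrix_mul_self F n) (by linear_combination -hr / 2)
      (by linear_combination hr / 2)
  refine ⟨X.map (algebraMap F K), ?_, ?_⟩
  · exact RingHom.map_det (algebraMap F K) X ▸
      (isUnit_det_of_transpose_mul_self_eq hX (Fin.revPerm_permMatrix_mul_self F n)).map _
  · rw [map_map_algebraMap_of_algHomClass, ← transpose_map, ← Matrix.map_mul, hX,
      PEquiv.map_toMatrix]
    exact Fin.revPerm_permMatrix_eq K n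

/-- if `-1` and `2` are squares in `F`, then for every `n` there is
`X ∈ GL(n,K)` with `X*X = S`, the anti-diagonal permutation matrix. -/
theorem stmt2 (F K : Type*) [Field F] [Field K] [CharZero F] [Algebra F K]
    (σ : K ≃ₐ[F] K) (hσinv : ∀ x, σ (σ x) = x)
    (hfix : ∀ x : K, σ x = x ↔ ∃ y : F, algebraMap F K y = x)
    (d : F) (hd0 : d ≠ 0) (hd : ¬ IsSquare d)
    (s : K) (hs : s * s = algebraMap F K d) (hσs : σ s = -s)
    (hgen : ∀ x : K, ∃ a b : F, x = algebraMap F K a + algebraMap F K b * s)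
    (h1 : IsSquare (-1 : F)) (h2 : IsSquare (2 : F)) (n : ℕ) :
    ∃ X : Matrix (Fin n) (Fin n) K, IsUnit X.det ∧
      (X.map σ)ᵀ * X =
        Matrix.of (fun i j : Fin n => if (i : ℕ) + (j : ℕ) + 1 = n then (1 : K) else 0) :=
  stmt2_general F K σ h1 n
end

section
/- Let F be a field of characteristic zero, K = F(√d) a quadratic extension with norm N. Suppose X, Y ∈ GL(n,K) satisfy X*X = D_X and Y*Y = D_Y with D_X = diag(d₁,...,dₙ), D_Y = diag(d₁',...,dₙ') diagonal invertible matrices over F. Then there exist Q ∈ GL(n,K) with Q*Q = 1 and a diagonal matrix D ∈ GL(n,K) such that Y = Q X D if and only if dᵢ' dᵢ⁻¹ ∈ N(K*) for all i. -/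
open Matrix

/-- cocycles `X`, `Y` with `X*X = D_X`, `Y*Y = D_Y` diagonal over `F` are
cohomologous (`Y = Q X D` with `Q` unitary, `D` diagonal invertible over `K`) iff
`dᵢ' dᵢ⁻¹ ∈ N(K*)` for all `i`. -/
theorem stmt5 (F K : Type*) [Field F] [Field K] [CharZero F] [Algebra F K]
    (σ : K ≃ₐ[F] K) (hσinv : ∀ x, σ (σ x) = x)
    (hfix : ∀ x : K, σ x = x ↔ ∃ y : F, algebraMap F K y = x)
    (d : F) (hd0 : d ≠ 0) (hd : ¬ IsSquare d)
    (s : K) (hs : s * s = algebraMap F K d) (hσs : σ s = -s)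
    (hgen : ∀ x : K, ∃ a b : F, x = algebraMap F K a + algebraMap F K b * s)
    (n : ℕ) (X Y : Matrix (Fin n) (Fin n) K) (hX : IsUnit X.det) (hY : IsUnit Y.det)
    (dX dY : Fin n → F) (hdX : ∀ i, dX i ≠ 0) (hdY : ∀ i, dY i ≠ 0)
    (hXX : (X.map σ)ᵀ * X = Matrix.diagonal fun i => algebraMap F K (dX i))
    (hYY : (Y.map σ)ᵀ * Y = Matrix.diagonal fun i => algebraMap F K (dY i)) :
    (∃ (Q : Matrix (Fin n) (Fin n) K) (e : Fin n → K),
        (Q.map σ)ᵀ * Q = 1 ∧ IsUnit (Matrix.diagonal e).det ∧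
        Y = Q * X * Matrix.diagonal e) ↔
      ∀ i : Fin n, ∃ z : K, z ≠ 0 ∧ σ z * z = algebraMap F K (dY i * (dX i)⁻¹) := by
  have hmapmul : ∀ A B : Matrix (Fin n) (Fin n) K,
      (A * B).map σ = A.map σ * B.map σ := by
    intro A B
    ext i j
    simp [Matrix.mul_apply, map_sum]
  have hmapone : (1 : Matrix (Fin n) (Fin n) K).map σ = 1 := by
    ext i j
    simp [Matrix.one_apply, apply_ite σ]
  have hdXK : ∀ i, algebraMap F K (dX i) ≠ 0 := fun i =>
    fun h => hdX i ((algebraMap F K).injective (by simpa using h))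
  constructor
  · rintro ⟨Q, e, hQ, he, rfl⟩
    have step : (X.map σ)ᵀ * ((Q.map σ)ᵀ * Q) * X
        = Matrix.diagonal fun i => algebraMap F K (dX i) := by
      rw [hQ, Matrix.mul_one, hXX]
    have key2 : ((Matrix.diagonal e).map σ)ᵀ
        * (Matrix.diagonal fun i => algebraMap F K (dX i)) * Matrix.diagonal e
        = Matrix.diagonal fun i => algebraMap F K (dY i) := by
      rw [← step, ← hYY, hmapmul, hmapmul, transpose_mul, transpose_mul]
      simp only [Matrix.mul_assoc]
    rw [Matrix.diagonal_map (map_zero _), Matrix.diagonal_transpose,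
      Matrix.diagonal_mul_diagonal, Matrix.diagonal_mul_diagonal] at key2
    have hne : ∀ i, e i ≠ 0 := by
      intro i h0
      rw [Matrix.det_diagonal] at he
      exact he.ne_zero (Finset.prod_eq_zero (Finset.mem_univ i) h0)
    intro i
    have h := Matrix.ext_iff.mpr key2 i i
    rw [Matrix.diagonal_apply_eq, Matrix.diagonal_apply_eq] at h
    refine ⟨e i, hne i, ?_⟩
    rw [_root_.map_mul, map_inv₀]
    field_simp [hdXK i]
    linear_combination h
  · intro h
    choose z hz0 hz using h
    have hdetD : IsUnit (Matrix.diagonal z).det := by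
      rw [Matrix.det_diagonal]
      exact isUnit_iff_ne_zero.mpr (Finset.prod_ne_zero_iff.mpr fun i _ => hz0 i)
    obtain ⟨A, hA⟩ : ∃ A, A = X * Matrix.diagonal z := ⟨_, rfl⟩
    have hdetA : IsUnit A.det := by
      rw [hA, Matrix.det_mul]
      exact hX.mul hdetD
    have hAXX : (A.map σ)ᵀ * A = Matrix.diagonal fun i => algebraMap F K (dY i) := by
      rw [hA, hmapmul, transpose_mul, Matrix.diagonal_map (map_zero _),
        Matrix.diagonal_transpose]
      have : (Matrix.diagonal fun i => σ (z i)) * (X.map σ)ᵀ * (X * Matrix.diagonal z)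
          = (Matrix.diagonal fun i => σ (z i)) * ((X.map σ)ᵀ * X) * Matrix.diagonal z := by
        simp only [Matrix.mul_assoc]
      rw [this, hXX, Matrix.diagonal_mul_diagonal, Matrix.diagonal_mul_diagonal]
      refine congrArg Matrix.diagonal (funext fun i => ?_)
      have hzi := hz i
      rw [_root_.map_mul, map_inv₀] at hzi
      field_simp [hdXK i] at hzi
      linear_combination hzi
    have hAA : A * A⁻¹ = 1 := Matrix.mul_nonsing_inv A hdetA
    refine ⟨Y * A⁻¹, z, ?_, hdetD, ?_⟩
    · calc ((Y * A⁻¹).map σ)ᵀ * (Y * A⁻¹)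
          = (A⁻¹.map σ)ᵀ * (((Y.map σ)ᵀ * Y) * A⁻¹) := by
            rw [hmapmul, transpose_mul]; simp only [Matrix.mul_assoc]
        _ = (A⁻¹.map σ)ᵀ * (((A.map σ)ᵀ * A) * A⁻¹) := by rw [hYY, hAXX]
        _ = ((A * A⁻¹).map σ)ᵀ * (A * A⁻¹) := by
            conv_rhs => rw [hmapmul, transpose_mul]
            simp only [Matrix.mul_assoc]
        _ = 1 := by rw [hAA, hmapone, transpose_one, Matrix.one_mul]
    · rw [Matrix.mul_assoc, ← hA, Matrix.mul_assoc, Matrix.nonsing_inv_mul A hdetA,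
        Matrix.mul_one]
end

section
/- Let F be a field of characteristic zero, K = F(√d) a quadratic extension, and n ≥ 1. Suppose d₁,...,dₙ ∈ F* satisfy: d₁⋯dₙ ∈ N(K*), and for each i there exist x,y ∈ K with N(x) + N(y)·(d₁⋯d_{i-1}) = dᵢ (with empty product 1). Assume moreover that no proper nonempty subproduct structure interferes, i.e. for every i < n, the auxiliary elements can be chosen with y-part giving nonzero off-diagonal entries (equivalently no proper nonempty subset {d₁,...,dᵢ} has product in N(K*)). Then there exists X ∈ GL(n,K) with X*X = diag(d₁,...,dₙ). -/
/-!
Write `X* = (X.map σ)ᵀ`, `N z = σ z * z` and `Pₖ = d₀ ⋯ d_{k-1}`. By induction on `k`,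
`diag(d₀, …, d_{k-1}, Pₖ, 1, …, 1)` is of the form `X* X`: the binary form `⟨Pₖ, 1⟩` represents
`dₖ = N x + N y · Pₖ`, hence is isometric to `⟨dₖ, Pₖ dₖ⟩ = ⟨dₖ, P_{k+1}⟩`. At the last index,
`P_{n-1} d_{n-1} = d₀ ⋯ d_{n-1} = N z`, so rescaling the last coordinate by `z / P_{n-1}` turns
`P_{n-1}` into `d_{n-1}`.
-/

open Matrix Function Finset

section HermitianCongruence

variable {K ι S : Type*} [CommRing K] [Fintype ι] [FunLike S K K]

def IsGramDiagonal [DecidableEq ι] (σ : S) (g : ι → K) : Prop :=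
  ∃ X : Matrix ι ι K, (X.map σ)ᵀ * X = diagonal g

variable [RingHomClass S K K]

theorem map_mul_transpose (σ : S) (A B : Matrix ι ι K) :
    ((A * B).map σ)ᵀ = (B.map σ)ᵀ * (A.map σ)ᵀ := by
  rw [← RingHom.coe_coe σ, Matrix.map_mul, Matrix.transpose_mul]

variable [DecidableEq ι]

theorem isGramDiagonal_one (σ : S) : IsGramDiagonal σ (1 : ι → K) :=
  ⟨1, by simp⟩

theorem IsGramDiagonal.of_congr {σ : S} {g g' : ι → K} (h : IsGramDiagonal σ g)
    {T : Matrix ι ι K} (hT : (T.map σ)ᵀ * diagonal g * T = diagonal g') :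
    IsGramDiagonal σ g' := by
  obtain ⟨X, hX⟩ := h
  exact ⟨X * T, by rw [map_mul_transpose, Matrix.mul_assoc, ← Matrix.mul_assoc _ X, hX,
    ← Matrix.mul_assoc, hT]⟩

theorem IsGramDiagonal.scale {σ : S} {g : ι → K} (h : IsGramDiagonal σ g) (t : ι → K) :
    IsGramDiagonal σ fun i => σ (t i) * g i * t i :=
  h.of_congr (T := diagonal t) <| by
    rw [diagonal_map (map_zero σ), diagonal_transpose, diagonal_mul_diagonal,
      diagonal_mul_diagonal]

/-- If `⟨P, Q⟩` represents `c = N x · Q + N y · P`, then `⟨P, Q⟩ ≅ ⟨c, PQc⟩`, via the isometry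
with columns `(y, x)` and `(-σ x · Q, σ y · P)`. -/
theorem IsGramDiagonal.update_update {σ : S} (hσ : ∀ x, σ (σ x) = x) {g : ι → K}
    (h : IsGramDiagonal σ g) {a b : ι} (hab : a ≠ b) (ha : σ (g a) = g a)
    (hb : σ (g b) = g b) {x y c : K} (hc : σ x * x * g b + σ y * y * g a = c) :
    IsGramDiagonal σ (update (update g a c) b (g a * g b * c)) := by
  let col : ι → ι → K := fun j => if j = a then Pi.single a y + Pi.single b x
    else if j = b then Pi.single a (-(σ x * g b)) + Pi.single b (σ y * g a) else Pi.single j 1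
  refine h.of_congr (T := of fun m j => col j m) ?_
  ext i j
  simp only [mul_apply, transpose_apply, map_apply, of_apply, diagonal_apply, mul_ite, mul_zero,
    sum_ite_eq', mem_univ, if_true]
  have hsplit : ∀ i, i = a ∨ i = b ∨ (i ≠ a ∧ i ≠ b) := by tauto
  rcases hsplit i with rfl | rfl | ⟨hia, hib⟩ <;> rcases hsplit j with rfl | rfl | ⟨hja, hjb⟩ <;>
    simp [col, Pi.single_apply, hab.symm, ite_mul, mul_ite, mul_add, add_mul, sum_add_distrib,
      *] <;>
    grind

end HermitianCongruence

theorem isUnit_det_of_gram_eq_diagonal {K ι S : Type*} [Field K] [Fintype ι] [DecidableEq ι]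
    [FunLike S K K] [RingHomClass S K K] {σ : S} {g : ι → K} {X : Matrix ι ι K}
    (hX : (X.map σ)ᵀ * X = diagonal g) (hg : ∀ i, g i ≠ 0) : IsUnit X.det := by
  have hdet := congrArg det hX
  rw [det_mul, det_diagonal] at hdet
  exact isUnit_iff_ne_zero.mpr <| right_ne_zero_of_mul <| hdet ▸ prod_ne_zero_iff.mpr fun i _ ↦ hg i

section NestedStage

variable {M : Type*} [CommMonoid M] {n : ℕ}

def nestedStage (e : Fin n → M) (k : Fin n) : Fin n → M :=
  fun i => if i < k then e i else if i = k then ∏ j ∈ Iio k, e j else 1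

theorem nestedStage_zero (e : Fin (n + 1) → M) : nestedStage e 0 = 1 := by
  ext i
  have : Iio (0 : Fin (n + 1)) = ∅ := by ext j; simp
  simp [nestedStage, this]

theorem nestedStage_succ (e : Fin (n + 1) → M) (k : Fin n) :
    nestedStage e k.succ =
      update (update (nestedStage e k.castSucc) k.castSucc (e k.castSucc)) k.succ
        (nestedStage e k.castSucc k.castSucc * nestedStage e k.castSucc k.succ * e k.castSucc) := by
  have hprod : ∏ j ∈ Iio k.succ, e j = (∏ j ∈ Iio k.castSucc, e j) * e k.castSucc := by
    rw [prod_Iio_mul_eq_prod_Iic]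
    congr 1
  have hlt : k.castSucc < k.succ := Fin.castSucc_lt_succ
  ext i
  rcases lt_trichotomy i k.castSucc with hi | rfl | hi
  · simp [nestedStage, hi, hi.ne, hi.trans hlt, (hi.trans hlt).ne]
  · simp [nestedStage, hlt, hlt.ne]
  · rcases (Fin.castSucc_lt_iff_succ_le.mp hi).eq_or_lt with rfl | hi'
    · simp [nestedStage, hprod, hlt.ne', hlt.not_gt]
    · simp [nestedStage, hi.not_gt, hi.ne', hi'.not_gt, hi'.ne']

end NestedStage

section NestedSequence

variable {K S : Type*} [FunLike S K K] {n : ℕ}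

theorem isGramDiagonal_nestedStage [CommRing K] [RingHomClass S K K] {σ : S} (hσ : ∀ x, σ (σ x) = x) {e : Fin (n + 1) → K}
    (he : ∀ i, σ (e i) = e i)
    (hnested : ∀ i, ∃ x y : K, σ x * x + σ y * y * ∏ j ∈ Iio i, e j = e i) (k : Fin (n + 1)) :
    IsGramDiagonal σ (nestedStage e k) := by
  induction k using Fin.induction with
  | zero => simpa [nestedStage_zero] using isGramDiagonal_one σ
  | succ k ih =>
    obtain ⟨x, y, hxy⟩ := hnested k.castSucc
    have hP : nestedStage e k.castSucc k.castSucc = ∏ j ∈ Iio k.castSucc, e j := by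
      simp [nestedStage]
    have h1 : nestedStage e k.castSucc k.succ = 1 := by
      simp [nestedStage, Fin.castSucc_lt_succ.not_gt, Fin.castSucc_lt_succ.ne']
    rw [nestedStage_succ]
    refine ih.update_update hσ Fin.castSucc_lt_succ.ne (x := x) (y := y) ?_ ?_ ?_
    · rw [hP, map_prod]
      exact prod_congr rfl fun j _ ↦ he j
    · rw [h1, map_one]
    · rw [h1, hP, mul_one, hxy]

theorem IsGramDiagonal.of_nestedStage_last [Field K] [RingHomClass S K K] {σ : S} {e : Fin (n + 1) → K}
    (h : IsGramDiagonal σ (nestedStage e (Fin.last n))) (he : ∀ i, σ (e i) = e i)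
    (hP : ∏ j ∈ Iio (Fin.last n), e j ≠ 0) {z : K} (hz : σ z * z = ∏ i, e i) :
    IsGramDiagonal σ e := by
  set P := ∏ j ∈ Iio (Fin.last n), e j
  have hσP : σ P = P := by
    rw [map_prod]
    exact prod_congr rfl fun j _ ↦ he j
  have hlast : P * e (Fin.last n) = ∏ i, e i := by
    rw [prod_Iio_mul_eq_prod_Iic]
    congr 1
    ext
    simp [Fin.le_last]
  convert h.scale (update 1 (Fin.last n) (z / P)) using 1
  ext i
  rcases eq_or_ne i (Fin.last n) with rfl | hi
  · simp only [nestedStage, lt_self_iff_false, if_false, if_true, update_self, map_div₀, hσP]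
    field_simp
    linear_combination P * hlast - P * hz
  · simp [nestedStage, hi, Fin.lt_last_iff_ne_last.mpr hi]

end NestedSequence

theorem stmt11_general (F K : Type*) [Field F] [Field K] [Algebra F K]
    (σ : K ≃ₐ[F] K) (hσinv : ∀ x, σ (σ x) = x)
    (n : ℕ) (hn : 1 ≤ n) (dseq : Fin n → F) (hdnz : ∀ i, dseq i ≠ 0)
    (hclosed : ∃ z : K, z ≠ 0 ∧ σ z * z = algebraMap F K (∏ i, dseq i))
    (hnested : ∀ i : Fin n, ∃ x y : K,
      σ x * x + (σ y * y) *
          algebraMap F K (∏ j ∈ Finset.univ.filter fun j : Fin n => j < i, dseq j) =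
        algebraMap F K (dseq i)) :
    ∃ X : Matrix (Fin n) (Fin n) K, IsUnit X.det ∧
      (X.map σ)ᵀ * X = Matrix.diagonal fun i => algebraMap F K (dseq i) := by
  obtain ⟨m, rfl⟩ : ∃ m, n = m + 1 := ⟨n - 1, by omega⟩
  have he : ∀ i, σ (algebraMap F K (dseq i)) = algebraMap F K (dseq i) := fun i ↦ σ.commutes _
  have hne : ∀ i, algebraMap F K (dseq i) ≠ 0 := fun i ↦ by simpa using hdnz i
  obtain ⟨z, -, hz⟩ := hclosed
  simp only [filter_gt_eq_Iio, map_prod] at hnested hz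
  obtain ⟨X, hX⟩ := (isGramDiagonal_nestedStage hσinv he hnested (Fin.last m)).of_nestedStage_last
    he (prod_ne_zero_iff.mpr fun i _ ↦ hne i) hz
  exact ⟨X, isUnit_det_of_gram_eq_diagonal hX hne, hX⟩

/-- if `{d₁,…,dₙ} ⊂ F*` is norm closed (`d₁⋯dₙ ∈ N(K*)`), quaternionically
nested (`dᵢ = N(x) + N(y)·d₁⋯d_{i-1}` for some `x, y ∈ K`), and no proper nonempty
initial segment has product in `N(K*)`, then there exists `X ∈ GL(n,K)` with
`X*X = diag(d₁,…,dₙ)`. -/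
theorem stmt11 (F K : Type*) [Field F] [Field K] [CharZero F] [Algebra F K]
    (σ : K ≃ₐ[F] K) (hσinv : ∀ x, σ (σ x) = x)
    (hfix : ∀ x : K, σ x = x ↔ ∃ y : F, algebraMap F K y = x)
    (d : F) (hd0 : d ≠ 0) (hd : ¬ IsSquare d)
    (s : K) (hs : s * s = algebraMap F K d) (hσs : σ s = -s)
    (hgen : ∀ x : K, ∃ a b : F, x = algebraMap F K a + algebraMap F K b * s)
    (n : ℕ) (hn : 1 ≤ n) (dseq : Fin n → F) (hdnz : ∀ i, dseq i ≠ 0)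
    (hclosed : ∃ z : K, z ≠ 0 ∧ σ z * z = algebraMap F K (∏ i, dseq i))
    (hnested : ∀ i : Fin n, ∃ x y : K,
      σ x * x + (σ y * y) *
          algebraMap F K (∏ j ∈ Finset.univ.filter fun j : Fin n => j < i, dseq j) =
        algebraMap F K (dseq i))
    (hnoproper : ∀ i : Fin n, (i : ℕ) + 1 < n →
      ¬ ∃ z : K, z ≠ 0 ∧
        σ z * z = algebraMap F K
          (∏ j ∈ Finset.univ.filter fun j : Fin n => j ≤ i, dseq j)) :
    ∃ X : Matrix (Fin n) (Fin n) K, IsUnit X.det ∧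
      (X.map σ)ᵀ * X = Matrix.diagonal fun i => algebraMap F K (dseq i) :=
  stmt11_general F K σ hσinv n hn dseq hdnz hclosed hnested
end

section
/- Let F be a field of characteristic zero over which every quaternion algebra has surjective norm (e.g. cohomological dimension ≤ 2), d ∈ F* \ F*², K = F(√d). Then for any d₁,...,d_{n-1} ∈ F* there exist dₙ ∈ F* and X ∈ GL(n,K) with X*X = diag(d₁,...,dₙ); moreover two such matrices X, Y with X*X = diag(d₁,...,dₙ), Y*Y = diag(d₁',...,dₙ') are related by Y = Q X D (Q unitary over F, D diagonal over K) iff dᵢ'/dᵢ ∈ N(K*) for all i. Consequently, the set of equivalence classes of such X is in bijection with (F*/N(K*))^{n-1}. -/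
/-!
A diagonal form `diag(d₁, …, dₙ)` is the hermitian square `X*X` of an invertible `X` as soon
as `∏ dᵢ` is a norm from `K`: surjectivity of the norm of the quaternion algebra `(d, -b/a)`
makes the binary form `⟨a, b⟩` represent `1`, so `diag(a, b) ≅ diag(ab, 1)`, and merging
entries pairwise reduces everything to the `1 × 1` case. Taking `dₙ = d₁ ⋯ d_{n-1}` makes the
product a square. Conversely `Y = Q X D` forces `dᵢ' = N(Dᵢ) dᵢ`, and if all ratios are
norms `N(zᵢ)` then `Q = Y (X diag z)⁻¹` is unitary. Since `det X` shows `∏ dᵢ ∈ N(K*)`, the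
class of `dₙ` is determined by the others, which gives the bijection with `(F*/N(K*))^{n-1}`.
-/

open Matrix

/-- The subgroup of `F*` of norms from `K* = F(√d)*`, where `σ` is the conjugation. -/
def normSubgroup (F K : Type*) [Field F] [Field K] [Algebra F K] (σ : K ≃ₐ[F] K) :
    Subgroup Fˣ where
  carrier := {u : Fˣ | ∃ z : K, z ≠ 0 ∧ σ z * z = algebraMap F K (u : F)}
  one_mem' := ⟨1, one_ne_zero, by simp⟩
  mul_mem' := by
    rintro x y ⟨z, hz, hz2⟩ ⟨w, hw, hw2⟩
    refine ⟨z * w, mul_ne_zero hz hw, ?_⟩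
    rw [_root_.map_mul σ, Units.val_mul, _root_.map_mul, ← hz2, ← hw2]; ring
  inv_mem' := by
    rintro x ⟨z, hz, hz2⟩
    refine ⟨z⁻¹, inv_ne_zero hz, ?_⟩
    rw [map_inv₀, ← mul_inv, hz2, Units.val_inv_eq_inv_val, map_inv₀]

namespace Matrix

section TransposeMap

variable {R G : Type*} [CommRing R] [FunLike G R R] [RingHomClass G R R] (σ : G) {m : Type*}

section Fintype

variable [Fintype m]

theorem transpose_map_mul (A B : Matrix m m R) :
    ((A * B).map σ)ᵀ = (B.map σ)ᵀ * (A.map σ)ᵀ := by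
  rw [← transpose_mul]
  exact congrArg transpose (Matrix.map_mul (f := (σ : R →+* R)))

theorem transpose_map_mul_self_mul (A B : Matrix m m R) :
    ((A * B).map σ)ᵀ * (A * B) = (B.map σ)ᵀ * ((A.map σ)ᵀ * A) * B := by
  rw [transpose_map_mul]; noncomm_ring

end Fintype

variable [DecidableEq m]

theorem transpose_map_one : ((1 : Matrix m m R).map σ)ᵀ = 1 := by
  simp [Matrix.map_one σ (map_zero σ) (map_one σ)]

theorem transpose_map_diagonal (v : m → R) :
    ((diagonal v).map σ)ᵀ = diagonal fun i => σ (v i) := by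
  rw [diagonal_map (map_zero σ), diagonal_transpose]

variable [Fintype m]

theorem transpose_map_mul_self_mul_diagonal {A : Matrix m m R} {v : m → R}
    (h : (A.map σ)ᵀ * A = diagonal v) (z : m → R) :
    ((A * diagonal z).map σ)ᵀ * (A * diagonal z) = diagonal fun i => σ (z i) * v i * z i := by
  rw [transpose_map_mul_self_mul, h, transpose_map_diagonal, diagonal_mul_diagonal,
    diagonal_mul_diagonal]

theorem det_transpose_map (A : Matrix m m R) : ((A.map σ)ᵀ).det = σ A.det := by
  rw [det_transpose]
  exact (RingHom.map_det (σ : R →+* R) A).symm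

theorem transpose_map_nonsing_inv (A : Matrix m m R) (hA : IsUnit A.det) :
    ((A⁻¹).map σ)ᵀ = ((A.map σ)ᵀ)⁻¹ :=
  (inv_eq_left_inv (by rw [← transpose_map_mul, mul_nonsing_inv A hA, transpose_map_one])).symm

theorem transpose_map_mul_self_mul_inv {W Y : Matrix m m R} (hW : IsUnit W.det)
    (h : (W.map σ)ᵀ * W = (Y.map σ)ᵀ * Y) : ((Y * W⁻¹).map σ)ᵀ * (Y * W⁻¹) = 1 := by
  have hW' : IsUnit ((W.map σ)ᵀ).det := by
    rw [det_transpose_map]; exact hW.map σ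
  rw [transpose_map_mul_self_mul, ← h, transpose_map_nonsing_inv σ W hW, Matrix.mul_assoc,
    Matrix.mul_assoc, mul_nonsing_inv W hW, Matrix.mul_one, nonsing_inv_mul _ hW']

end TransposeMap

theorem isUnit_det_of_mul_eq_diagonal {K m : Type*} [Field K] [Fintype m] [DecidableEq m]
    {A B : Matrix m m K} {v : m → K} (hv : ∀ i, v i ≠ 0) (h : B * A = diagonal v) :
    IsUnit A.det := by
  refine isUnit_of_mul_isUnit_right (x := B.det) ?_
  rw [← det_mul, h, det_diagonal]
  exact (Finset.prod_ne_zero_iff.2 fun i _ => hv i).isUnit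

end Matrix

theorem Fin.append_eq_snoc_snoc {α : Type*} {k : ℕ} (r : Fin k → α) (x y : α) :
    Fin.append r ![x, y] = Fin.snoc (Fin.snoc r x) y := by
  funext i
  induction i using Fin.lastCases with
  | last => rw [Fin.snoc_last]; exact Fin.append_right r ![x, y] 1
  | cast i =>
    induction i using Fin.lastCases with
    | last => rw [Fin.snoc_castSucc, Fin.snoc_last]; exact Fin.append_right r ![x, y] 0
    | cast i => rw [Fin.snoc_castSucc, Fin.snoc_castSucc]; exact Fin.append_left r ![x, y] i

theorem Fin.eq_of_init_eq_of_prod_eq {M : Type*} [CancelCommMonoid M] {n : ℕ}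
    {f g : Fin (n + 1) → M} (hprod : ∏ i, f i = ∏ i, g i) (hinit : Fin.init f = Fin.init g) :
    f = g := by
  have hcast : ∀ i : Fin n, f i.castSucc = g i.castSucc := congrFun hinit
  simp only [Fin.prod_univ_castSucc, hcast] at hprod
  funext i
  induction i using Fin.lastCases with
  | last => exact mul_left_cancel hprod
  | cast i => exact hcast i

section Congruence

variable {R G : Type*} [CommRing R] [FunLike G R R] (σ : G)

def DiagonalCongr {m : Type*} [Fintype m] [DecidableEq m] (v w : m → R) : Prop :=
  ∃ P : Matrix m m R, (P.map σ)ᵀ * diagonal v * P = diagonal w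

variable {σ} {m n : Type*} [Fintype m] [DecidableEq m] [Fintype n] [DecidableEq n]

theorem DiagonalCongr.comp_equiv {v w : m → R} (h : DiagonalCongr σ v w) (e : n ≃ m) :
    DiagonalCongr σ (v ∘ e) (w ∘ e) := by
  obtain ⟨P, hP⟩ := h
  refine ⟨P.submatrix e e, ?_⟩
  rw [← submatrix_diagonal_equiv, ← submatrix_diagonal_equiv, ← hP, ← submatrix_map,
    transpose_submatrix, submatrix_mul_equiv, submatrix_mul_equiv]

theorem diagonalCongr_one_iff (w : m → R) :
    DiagonalCongr σ 1 w ↔ ∃ X : Matrix m m R, (X.map σ)ᵀ * X = diagonal w := by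
  simp only [DiagonalCongr, Pi.one_def, diagonal_one, Matrix.mul_one]

variable [RingHomClass G R R]

namespace DiagonalCongr

theorem refl (v : m → R) : DiagonalCongr σ v v :=
  ⟨1, by rw [transpose_map_one, Matrix.one_mul, Matrix.mul_one]⟩

theorem trans {u v w : m → R} (h₁ : DiagonalCongr σ u v) (h₂ : DiagonalCongr σ v w) :
    DiagonalCongr σ u w := by
  obtain ⟨P, hP⟩ := h₁
  obtain ⟨Q, hQ⟩ := h₂
  refine ⟨P * Q, ?_⟩
  rw [transpose_map_mul, ← hQ, ← hP]
  noncomm_ring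

theorem of_diagonal (v z : m → R) : DiagonalCongr σ v fun i => σ (z i) * v i * z i :=
  ⟨diagonal z, by rw [transpose_map_diagonal, diagonal_mul_diagonal, diagonal_mul_diagonal]⟩

theorem sumElim {v v' : m → R} {w w' : n → R} (hv : DiagonalCongr σ v v')
    (hw : DiagonalCongr σ w w') : DiagonalCongr σ (Sum.elim v w) (Sum.elim v' w') := by
  obtain ⟨P, hP⟩ := hv
  obtain ⟨Q, hQ⟩ := hw
  refine ⟨fromBlocks P 0 0 Q, ?_⟩
  simp only [← fromBlocks_diagonal, fromBlocks_map, fromBlocks_transpose, fromBlocks_multiply,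
    ← hP, ← hQ, Matrix.map_zero _ (map_zero σ)]
  simp

theorem append {k l : ℕ} {v v' : Fin k → R} {w w' : Fin l → R} (hv : DiagonalCongr σ v v')
    (hw : DiagonalCongr σ w w') : DiagonalCongr σ (Fin.append v w) (Fin.append v' w') := by
  have happend : ∀ (x : Fin k → R) (y : Fin l → R),
      Fin.append x y = Sum.elim x y ∘ finSumFinEquiv.symm := by
    intro x y
    funext i
    induction i using Fin.addCases <;> simp
  rw [happend, happend]
  exact (hv.sumElim hw).comp_equiv _

theorem snoc {k : ℕ} {v w : Fin k → R} (h : DiagonalCongr σ v w) (c : R) :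
    DiagonalCongr σ (Fin.snoc v c) (Fin.snoc w c) := by
  simpa only [Fin.append_right_eq_snoc] using h.append (refl fun _ : Fin 1 => c)

theorem snoc_snoc {k : ℕ} {x₁ x₂ y₁ y₂ : R}
    (h : DiagonalCongr σ ![x₁, x₂] ![y₁, y₂]) (r : Fin k → R) :
    DiagonalCongr σ (Fin.snoc (Fin.snoc r x₁) x₂) (Fin.snoc (Fin.snoc r y₁) y₂) := by
  simpa only [Fin.append_eq_snoc_snoc] using (refl r).append h

end DiagonalCongr

end Congruence

def BinaryNormFormsRepresentOne (F : Type*) {R G : Type*} [Field F] [CommRing R] [Algebra F R]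
    [FunLike G R R] (σ : G) : Prop :=
  ∀ a b : F, a ≠ 0 → b ≠ 0 →
    ∃ u v : R, algebraMap F R a * (σ u * u) + algebraMap F R b * (σ v * v) = 1

section QuadraticExtension

variable {F K G : Type*} [Field F] [Field K] [Algebra F K] [FunLike G K K]
  [AlgHomClass G F K K] (σ : G) {d : F} {s : K}

theorem norm_algebraMap_add_algebraMap_mul (hs : s * s = algebraMap F K d) (hσs : σ s = -s)
    (x y : F) :
    σ (algebraMap F K x + algebraMap F K y * s) * (algebraMap F K x + algebraMap F K y * s) =
      algebraMap F K (x ^ 2 - d * y ^ 2) := by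
  simp only [map_add, _root_.map_mul, hσs, AlgHomClass.commutes, map_sub, map_pow]
  linear_combination (-(algebraMap F K y) ^ 2) * hs

/-- The quaternion norm form of `(d, -b/a)` takes the value `1/a`. -/
theorem binaryNormFormsRepresentOne_of_quaternion (hs : s * s = algebraMap F K d)
    (hσs : σ s = -s)
    (hquat : ∀ b c : F, b ≠ 0 → c ≠ 0 →
      ∃ x y z w : F, (x ^ 2 - d * y ^ 2) - b * (z ^ 2 - d * w ^ 2) = c) :
    BinaryNormFormsRepresentOne F σ := by
  intro a b ha hb
  obtain ⟨x, y, z, w, h⟩ := hquat (-(b / a)) a⁻¹ (neg_ne_zero.2 (div_ne_zero hb ha))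
    (inv_ne_zero ha)
  refine ⟨algebraMap F K x + algebraMap F K y * s, algebraMap F K z + algebraMap F K w * s, ?_⟩
  rw [norm_algebraMap_add_algebraMap_mul σ hs hσs, norm_algebraMap_add_algebraMap_mul σ hs hσs,
    ← _root_.map_mul, ← _root_.map_mul, ← map_add, ← map_one (algebraMap F K)]
  congr 1
  field_simp at h
  linear_combination h

end QuadraticExtension

section Existence

variable {F R G : Type*} [Field F] [CommRing R] [Algebra F R] [FunLike G R R]
  [AlgHomClass G F R R] (σ : G)

theorem diagonalCongr_pair (hσ : ∀ x, σ (σ x) = x) {a b : F} {u v : R}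
    (h : algebraMap F R a * (σ u * u) + algebraMap F R b * (σ v * v) = 1) :
    DiagonalCongr σ ![algebraMap F R (a * b), 1] ![algebraMap F R a, algebraMap F R b] := by
  refine ⟨!![v, -u; algebraMap F R a * σ u, algebraMap F R b * σ v], ?_⟩
  ext i j
  fin_cases i <;> fin_cases j <;>
    simp [mul_apply, Fin.sum_univ_two, diagonal, hσ, AlgHomClass.commutes]
  · linear_combination algebraMap F R a * h
  · ring
  · ring
  · linear_combination algebraMap F R b * h

theorem diagonalCongr_one_of_prod_eq_norm (hσ : ∀ x, σ (σ x) = x)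
    (hrep : BinaryNormFormsRepresentOne F σ) {k : ℕ} {D : Fin (k + 1) → F}
    (hD : ∀ i, D i ≠ 0) (hprod : ∃ z : R, σ z * z = algebraMap F R (∏ i, D i)) :
    DiagonalCongr σ 1 (algebraMap F R ∘ D) := by
  induction k with
  | zero =>
    obtain ⟨z, hz⟩ := hprod
    have hD : algebraMap F R ∘ D = fun i => σ z * (1 : Fin 1 → R) i * z := by
      funext i
      rw [Fin.fin_one_eq_zero i, Function.comp_apply, Pi.one_apply, mul_one, hz,
        Fin.prod_univ_one]
    rw [hD]
    exact .of_diagonal 1 fun _ => z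
  | succ k ih =>
    obtain ⟨r, a, b, rfl⟩ : ∃ r a b, D = Fin.snoc (Fin.snoc r a) b :=
      ⟨Fin.init (Fin.init D), Fin.init D (Fin.last k), D (Fin.last _), by
        simp only [Fin.snoc_init_self]⟩
    have ha : a ≠ 0 := by simpa using hD (Fin.last k).castSucc
    have hb : b ≠ 0 := by simpa using hD (Fin.last _)
    obtain ⟨u, v, huv⟩ := hrep a b ha hb
    have hr : DiagonalCongr σ 1 (Fin.snoc (algebraMap F R ∘ r) (algebraMap F R (a * b))) := by
      rw [← Fin.comp_snoc]
      refine ih (fun i => ?_) (by simpa [Fin.prod_univ_castSucc, mul_assoc] using hprod)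
      induction i using Fin.lastCases with
      | last => simpa using mul_ne_zero ha hb
      | cast i => simpa using hD i.castSucc.castSucc
    have h := (hr.snoc 1).trans ((diagonalCongr_pair σ hσ huv).snoc_snoc (algebraMap F R ∘ r))
    have h1 : (Fin.snoc (1 : Fin (k + 1) → R) 1 : Fin (k + 2) → R) = 1 := by
      rw [← Fin.snoc_init_self (1 : Fin (k + 2) → R)]; rfl
    rwa [h1, ← Fin.comp_snoc, ← Fin.comp_snoc] at h

end Existence

theorem exists_isUnit_det_transpose_map_mul_self_eq_diagonal_snoc {F K G : Type*} [Field F]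
    [Field K] [Algebra F K] [FunLike G K K] [AlgHomClass G F K K] (σ : G)
    (hσ : ∀ x, σ (σ x) = x) (hrep : BinaryNormFormsRepresentOne F σ)
    {n : ℕ} (dseq : Fin n → F) (hdseq : ∀ i, dseq i ≠ 0) :
    ∃ dn : F, dn ≠ 0 ∧ ∃ X : Matrix (Fin (n + 1)) (Fin (n + 1)) K, IsUnit X.det ∧
      (X.map σ)ᵀ * X =
        diagonal (Fin.snoc (fun i => algebraMap F K (dseq i)) (algebraMap F K dn)) := by
  set D : Fin (n + 1) → F := Fin.snoc dseq (∏ i, dseq i) with hD_def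
  have hD : ∀ i, D i ≠ 0 := by
    intro i
    induction i using Fin.lastCases with
    | last => simpa [hD_def] using Finset.prod_ne_zero_iff.2 fun i _ => hdseq i
    | cast i => simpa [hD_def] using hdseq i
  have hprod : ∃ z : K, σ z * z = algebraMap F K (∏ i, D i) :=
    ⟨algebraMap F K (∏ i, dseq i),
      by simp [hD_def, Fin.prod_univ_castSucc, AlgHomClass.commutes]⟩
  obtain ⟨X, hX⟩ :=
    (diagonalCongr_one_iff _).1 (diagonalCongr_one_of_prod_eq_norm σ hσ hrep hD hprod)
  refine ⟨_, by simpa [hD_def] using hD (Fin.last n), X,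
    isUnit_det_of_mul_eq_diagonal (fun i => (map_ne_zero _).2 (hD i)) hX, ?_⟩
  rw [hX, hD_def, Fin.comp_snoc]
  rfl

section UnitaryDiagonal

variable {K G : Type*} [Field K] [FunLike G K K] [RingHomClass G K K] (σ : G)
  {m : Type*} [Fintype m] [DecidableEq m]

def UnitaryDiagonalRel (X Y : Matrix m m K) : Prop :=
  ∃ (Q : Matrix m m K) (e : m → K), (Q.map σ)ᵀ * Q = 1 ∧ IsUnit (diagonal e).det ∧
    Y = Q * X * diagonal e

theorem unitaryDiagonalRel_iff {X Y : Matrix m m K} {dX dY : m → K} (hdX : ∀ i, dX i ≠ 0)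
    (hX : (X.map σ)ᵀ * X = diagonal dX) (hY : (Y.map σ)ᵀ * Y = diagonal dY) :
    UnitaryDiagonalRel σ X Y ↔ ∀ i, ∃ z : K, z ≠ 0 ∧ σ z * z = dY i / dX i := by
  constructor
  · rintro ⟨Q, e, hQ, he, rfl⟩ i
    have he0 : ∀ i, e i ≠ 0 := by
      simpa [det_diagonal, Finset.prod_ne_zero_iff] using he.ne_zero
    have hdiag : diagonal dY = diagonal fun i => σ (e i) * dX i * e i := by
      refine hY.symm.trans (transpose_map_mul_self_mul_diagonal σ ?_ e)
      rw [transpose_map_mul_self_mul, hQ, Matrix.mul_one, hX]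
    refine ⟨e i, he0 i, ?_⟩
    rw [congrFun (diagonal_injective hdiag) i]
    field_simp [hdX i]
  · intro h
    choose z hz0 hz using h
    have hW : ((X * diagonal z).map σ)ᵀ * (X * diagonal z) = (Y.map σ)ᵀ * Y := by
      rw [transpose_map_mul_self_mul_diagonal σ hX, hY]
      congr 1
      funext i
      rw [mul_right_comm, hz i]
      field_simp [hdX i]
    have hz_unit : IsUnit (diagonal z).det := by
      rw [det_diagonal]
      exact (Finset.prod_ne_zero_iff.2 fun i _ => hz0 i).isUnit
    have hW_unit : IsUnit (X * diagonal z).det := by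
      rw [det_mul]
      exact (isUnit_det_of_mul_eq_diagonal hdX hX).mul hz_unit
    refine ⟨Y * (X * diagonal z)⁻¹, z, transpose_map_mul_self_mul_inv σ hW_unit hW, hz_unit,
      ?_⟩
    rw [Matrix.mul_assoc, Matrix.mul_assoc, Matrix.nonsing_inv_mul _ hW_unit, Matrix.mul_one]

end UnitaryDiagonal

theorem normSubgroup.mk_eq_mk_iff {F K : Type*} [Field F] [Field K] [Algebra F K]
    (σ : K ≃ₐ[F] K) (u v : Fˣ) :
    (u : Fˣ ⧸ normSubgroup F K σ) = v ↔
      ∃ z : K, z ≠ 0 ∧ σ z * z = algebraMap F K v / algebraMap F K u := by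
  rw [QuotientGroup.eq]
  simp [normSubgroup, div_eq_inv_mul]

abbrev DiagonalCocycle {F K : Type*} [Field F] [Field K] [Algebra F K] (σ : K ≃ₐ[F] K)
    (m : Type*) [Fintype m] [DecidableEq m] : Type _ :=
  {A : Matrix m m K // IsUnit A.det ∧ ∃ D : m → F, (∀ i, D i ≠ 0) ∧
    (A.map σ)ᵀ * A = diagonal fun i => algebraMap F K (D i)}

namespace DiagonalCocycle

variable {F K : Type*} [Field F] [Field K] [Algebra F K] {σ : K ≃ₐ[F] K}

section Diag

variable {m : Type*} [Fintype m] [DecidableEq m]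

noncomputable def diag (A : DiagonalCocycle σ m) (i : m) : Fˣ :=
  Units.mk0 (A.2.2.choose i) (A.2.2.choose_spec.1 i)

theorem transpose_map_mul_self (A : DiagonalCocycle σ m) :
    (A.1.map σ)ᵀ * A.1 = diagonal fun i => algebraMap F K (A.diag i) :=
  A.2.2.choose_spec.2

theorem diag_eq {A : DiagonalCocycle σ m} {D : m → F}
    (h : (A.1.map σ)ᵀ * A.1 = diagonal fun i => algebraMap F K (D i)) (i : m) :
    (A.diag i : F) = D i :=
  (algebraMap F K).injective
    (congrFun (diagonal_injective (A.transpose_map_mul_self.symm.trans h)) i)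

theorem prod_mk_diag (A : DiagonalCocycle σ m) :
    ∏ i, (A.diag i : Fˣ ⧸ normSubgroup F K σ) = 1 := by
  rw [← QuotientGroup.mk_prod, QuotientGroup.eq_one_iff]
  refine ⟨A.1.det, A.2.1.ne_zero, ?_⟩
  rw [← det_transpose_map, ← det_mul, A.transpose_map_mul_self, det_diagonal, Units.coe_prod,
    map_prod]

theorem unitaryDiagonalRel_iff (A B : DiagonalCocycle σ m) :
    UnitaryDiagonalRel σ A.1 B.1 ↔
      (fun i => (A.diag i : Fˣ ⧸ normSubgroup F K σ)) = fun i => (B.diag i : Fˣ ⧸ _) := by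
  rw [_root_.unitaryDiagonalRel_iff σ (fun i => by simp) A.transpose_map_mul_self
    B.transpose_map_mul_self, funext_iff]
  simp only [normSubgroup.mk_eq_mk_iff]

end Diag

variable {n : ℕ}

noncomputable def classes (A : DiagonalCocycle σ (Fin (n + 1))) :
    Fin n → Fˣ ⧸ normSubgroup F K σ :=
  Fin.init fun i => (A.diag i : Fˣ ⧸ normSubgroup F K σ)

theorem unitaryDiagonalRel_iff_classes_eq (A B : DiagonalCocycle σ (Fin (n + 1))) :
    UnitaryDiagonalRel σ A.1 B.1 ↔ A.classes = B.classes := by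
  rw [unitaryDiagonalRel_iff]
  exact ⟨congrArg Fin.init,
    Fin.eq_of_init_eq_of_prod_eq (A.prod_mk_diag.trans B.prod_mk_diag.symm)⟩

theorem classes_surjective (hσ : ∀ x, σ (σ x) = x) (hrep : BinaryNormFormsRepresentOne F σ) :
    Function.Surjective (classes (σ := σ) (n := n)) := by
  intro g
  choose u hu using fun i => QuotientGroup.mk_surjective (g i)
  obtain ⟨dn, hdn, X, hXdet, hX⟩ :=
    exists_isUnit_det_transpose_map_mul_self_eq_diagonal_snoc σ hσ hrep (fun i => (u i : F))
      fun i => (u i).ne_zero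
  set D : Fin (n + 1) → F := Fin.snoc (fun i => (u i : F)) dn with hD_def
  have hXD : (X.map σ)ᵀ * X = diagonal fun i => algebraMap F K (D i) := by
    rw [hX]
    exact congrArg diagonal (Fin.comp_snoc (algebraMap F K) (fun i => (u i : F)) dn).symm
  have hD : ∀ i, D i ≠ 0 := by
    intro i
    induction i using Fin.lastCases with
    | last => simp [hD_def, hdn]
    | cast i => simp [hD_def]
  let A : DiagonalCocycle σ (Fin (n + 1)) := ⟨X, hXdet, D, hD, hXD⟩
  have hdiag : ∀ i : Fin n, A.diag i.castSucc = u i := fun i =>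
    Units.ext (by rw [diag_eq (A := A) hXD, hD_def, Fin.snoc_castSucc])
  exact ⟨A, funext fun i => (congrArg QuotientGroup.mk (hdiag i)).trans (hu i)⟩

noncomputable def quotEquiv (hσ : ∀ x, σ (σ x) = x) (hrep : BinaryNormFormsRepresentOne F σ) :
    Quot (fun A B : DiagonalCocycle σ (Fin (n + 1)) => UnitaryDiagonalRel σ A.1 B.1) ≃
      (Fin n → Fˣ ⧸ normSubgroup F K σ) :=
  (Quot.congrRight fun A B =>
      (unitaryDiagonalRel_iff_classes_eq A B).trans Setoid.ker_def.symm).trans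
    (Setoid.quotientKerEquivOfSurjective _ (classes_surjective hσ hrep))

end DiagonalCocycle

theorem stmt12_general (F K : Type*) [Field F] [Field K] [Algebra F K]
    (σ : K ≃ₐ[F] K) (hσinv : ∀ x, σ (σ x) = x)
    (d : F) (hd0 : d ≠ 0)
    (s : K) (hs : s * s = algebraMap F K d) (hσs : σ s = -s)
    (hquat : ∀ a b c : F, a ≠ 0 → b ≠ 0 → c ≠ 0 →
      ∃ x y z w : F, (x ^ 2 - a * y ^ 2) - b * (z ^ 2 - a * w ^ 2) = c)
    (n : ℕ) :
    (∀ dseq : Fin n → F, (∀ i, dseq i ≠ 0) →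
      ∃ dn : F, dn ≠ 0 ∧ ∃ X : Matrix (Fin (n + 1)) (Fin (n + 1)) K, IsUnit X.det ∧
        (X.map σ)ᵀ * X =
          Matrix.diagonal (Fin.snoc (fun i => algebraMap F K (dseq i)) (algebraMap F K dn))) ∧
    (∀ (X Y : Matrix (Fin (n + 1)) (Fin (n + 1)) K), IsUnit X.det → IsUnit Y.det →
      ∀ dX dY : Fin (n + 1) → F, (∀ i, dX i ≠ 0) → (∀ i, dY i ≠ 0) →
        (X.map σ)ᵀ * X = Matrix.diagonal (fun i => algebraMap F K (dX i)) →
        (Y.map σ)ᵀ * Y = Matrix.diagonal (fun i => algebraMap F K (dY i)) →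
        ((∃ (Q : Matrix (Fin (n + 1)) (Fin (n + 1)) K) (e : Fin (n + 1) → K),
            (Q.map σ)ᵀ * Q = 1 ∧ IsUnit (Matrix.diagonal e).det ∧
            Y = Q * X * Matrix.diagonal e) ↔
          ∀ i, ∃ z : K, z ≠ 0 ∧ σ z * z = algebraMap F K (dY i * (dX i)⁻¹))) ∧
    Nonempty
      ((Quot fun (X Y : {A : Matrix (Fin (n + 1)) (Fin (n + 1)) K // IsUnit A.det ∧
            ∃ D : Fin (n + 1) → F, (∀ i, D i ≠ 0) ∧
              (A.map σ)ᵀ * A = Matrix.diagonal fun i => algebraMap F K (D i)}) =>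
          ∃ (Q : Matrix (Fin (n + 1)) (Fin (n + 1)) K) (e : Fin (n + 1) → K),
            (Q.map σ)ᵀ * Q = 1 ∧ IsUnit (Matrix.diagonal e).det ∧
            Y.val = Q * X.val * Matrix.diagonal e) ≃
        (Fin n → Fˣ ⧸ normSubgroup F K σ)) := by
  have hrep : BinaryNormFormsRepresentOne F σ :=
    binaryNormFormsRepresentOne_of_quaternion σ hs hσs fun b c => hquat d b c hd0
  refine ⟨exists_isUnit_det_transpose_map_mul_self_eq_diagonal_snoc σ hσinv hrep,
    fun X Y _ _ dX dY hdX _ hX hY => ?_, ⟨DiagonalCocycle.quotEquiv hσinv hrep⟩⟩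
  have hdX' : ∀ i, algebraMap F K (dX i) ≠ 0 := fun i => (map_ne_zero _).2 (hdX i)
  simpa only [UnitaryDiagonalRel, map_mul, map_inv₀, div_eq_mul_inv] using
    unitaryDiagonalRel_iff σ hdX' hX hY

/-- over a field where every quaternion algebra has surjective norm, for any
`d₁,…,d_{n-1} ∈ F*` (here `dseq : Fin n → F`, matrices of size `n+1`) there are `dₙ` and a
cocycle `X` with `X*X = diag(d₁,…,dₙ)`; two cocycles are related by `Y = Q X D` iff
`dᵢ'/dᵢ ∈ N(K*)` for all `i`; and the set of classes of cocycles is in bijection with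
`(F*/N(K*))ⁿ`. -/
theorem stmt12 (F K : Type*) [Field F] [Field K] [CharZero F] [Algebra F K]
    (σ : K ≃ₐ[F] K) (hσinv : ∀ x, σ (σ x) = x)
    (hfix : ∀ x : K, σ x = x ↔ ∃ y : F, algebraMap F K y = x)
    (d : F) (hd0 : d ≠ 0) (hd : ¬ IsSquare d)
    (s : K) (hs : s * s = algebraMap F K d) (hσs : σ s = -s)
    (hgen : ∀ x : K, ∃ a b : F, x = algebraMap F K a + algebraMap F K b * s)
    (hquat : ∀ a b c : F, a ≠ 0 → b ≠ 0 → c ≠ 0 →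
      ∃ x y z w : F, (x ^ 2 - a * y ^ 2) - b * (z ^ 2 - a * w ^ 2) = c)
    (n : ℕ) :
    (∀ dseq : Fin n → F, (∀ i, dseq i ≠ 0) →
      ∃ dn : F, dn ≠ 0 ∧ ∃ X : Matrix (Fin (n + 1)) (Fin (n + 1)) K, IsUnit X.det ∧
        (X.map σ)ᵀ * X =
          Matrix.diagonal (Fin.snoc (fun i => algebraMap F K (dseq i)) (algebraMap F K dn))) ∧
    (∀ (X Y : Matrix (Fin (n + 1)) (Fin (n + 1)) K), IsUnit X.det → IsUnit Y.det →
      ∀ dX dY : Fin (n + 1) → F, (∀ i, dX i ≠ 0) → (∀ i, dY i ≠ 0) →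
        (X.map σ)ᵀ * X = Matrix.diagonal (fun i => algebraMap F K (dX i)) →
        (Y.map σ)ᵀ * Y = Matrix.diagonal (fun i => algebraMap F K (dY i)) →
        ((∃ (Q : Matrix (Fin (n + 1)) (Fin (n + 1)) K) (e : Fin (n + 1) → K),
            (Q.map σ)ᵀ * Q = 1 ∧ IsUnit (Matrix.diagonal e).det ∧
            Y = Q * X * Matrix.diagonal e) ↔
          ∀ i, ∃ z : K, z ≠ 0 ∧ σ z * z = algebraMap F K (dY i * (dX i)⁻¹))) ∧
    Nonempty
      ((Quot fun (X Y : {A : Matrix (Fin (n + 1)) (Fin (n + 1)) K // IsUnit A.det ∧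
            ∃ D : Fin (n + 1) → F, (∀ i, D i ≠ 0) ∧
              (A.map σ)ᵀ * A = Matrix.diagonal fun i => algebraMap F K (D i)}) =>
          ∃ (Q : Matrix (Fin (n + 1)) (Fin (n + 1)) K) (e : Fin (n + 1) → K),
            (Q.map σ)ᵀ * Q = 1 ∧ IsUnit (Matrix.diagonal e).det ∧
            Y.val = Q * X.val * Matrix.diagonal e) ≃
        (Fin n → Fˣ ⧸ normSubgroup F K σ)) :=
  stmt12_general F K σ hσinv d hd0 s hs hσs hquat n
end

section
/- Let R be a real closed field, F ∈ {R, R(X), R(X,Y)}, d ∈ F* negative, K = F(√d), and D = diag(d₁,...,dₙ) ∈ GL(n,F). If there exists X ∈ GL(n,K) with X*X = D, then each dᵢ is positive and d₁⋯dₙ ∈ N(K*). (The converse also holds, using that every positive element of F is a value of every 2-Pfister form over F, by Pfister's theorem.) -/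
/-! Write `N x = σ x * x`. Every `x ∈ K` is `a + b s`, so `N x = a² + (-d) b²` is a sum of
squares in `F`. Comparing the diagonal entries of `X* X = D` shows that each `dᵢ` is a sum of
norms `N (X j i)`, hence a sum of squares; comparing determinants gives `∏ dᵢ = N (det X)`. -/

open Matrix

section QuadraticExtension

variable {F K G : Type*} [CommRing F] [CommRing K] [Algebra F K]
  [FunLike G K K] [AlgHomClass G F K K] (σ : G)

theorem conj_mul_self_eq_algebraMap {d : F} {s : K} (hs : s * s = algebraMap F K d)
    (hσs : σ s = -s) (a b : F) :
    σ (algebraMap F K a + algebraMap F K b * s) * (algebraMap F K a + algebraMap F K b * s) =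
      algebraMap F K (a * a + -d * (b * b)) := by
  have hσ : σ (algebraMap F K a + algebraMap F K b * s) =
      algebraMap F K a - algebraMap F K b * s := by
    rw [map_add, map_mul, AlgHomClass.commutes, AlgHomClass.commutes, hσs, mul_neg,
      sub_eq_add_neg]
  rw [hσ]
  calc (algebraMap F K a - algebraMap F K b * s) * (algebraMap F K a + algebraMap F K b * s)
      = algebraMap F K a * algebraMap F K a - algebraMap F K b * algebraMap F K b * (s * s) := by
        ring
    _ = algebraMap F K (a * a + -d * (b * b)) := by
        rw [hs]
        simp only [map_add, map_mul, map_neg]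
        ring

theorem exists_isSumSq_conj_mul_eq_algebraMap {d : F} (hd : IsSumSq (-d)) {s : K}
    (hs : s * s = algebraMap F K d) (hσs : σ s = -s)
    (hgen : ∀ x : K, ∃ a b : F, x = algebraMap F K a + algebraMap F K b * s) (x : K) :
    ∃ e : F, IsSumSq e ∧ σ x * x = algebraMap F K e := by
  obtain ⟨a, b, rfl⟩ := hgen x
  exact ⟨_, .sq_add a (hd.mul (.mul_self b)), conj_mul_self_eq_algebraMap σ hs hσs a b⟩

end QuadraticExtension

theorem isSumSq_of_algebraMap_eq_sum_conj_mul {F K : Type*} [CommRing F] [CommRing K]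
    [Algebra F K] (σ : K → K) (hinj : Function.Injective (algebraMap F K))
    (hnorm : ∀ x : K, ∃ e : F, IsSumSq e ∧ σ x * x = algebraMap F K e)
    {ι : Type*} [Fintype ι] (v : ι → K) {c : F}
    (hc : algebraMap F K c = ∑ j, σ (v j) * v j) : IsSumSq c := by
  choose e he hσe using hnorm
  have hce : c = ∑ j, e (v j) := hinj <| by
    rw [hc, map_sum]
    exact Finset.sum_congr rfl fun j _ ↦ hσe (v j)
  exact hce ▸ IsSumSq.sum fun j _ ↦ he (v j)

theorem Matrix.det_map_transpose_mul {n K G : Type*} [Fintype n] [DecidableEq n] [CommRing K]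
    [FunLike G K K] [RingHomClass G K K] (f : G) (X : Matrix n n K) :
    ((X.map f)ᵀ * X).det = f X.det * X.det := by
  rw [det_mul, det_transpose]
  exact congrArg (· * X.det) (RingHom.map_det (f : K →+* K) X).symm

theorem stmt16_general (F : Type*) [Field F] (K : Type*) [Field K] [Algebra F K] (σ : K ≃ₐ[F] K)
    (d : F) (hdneg : IsSumSq (-d))
    (s : K) (hs : s * s = algebraMap F K d) (hσs : σ s = -s)
    (hgen : ∀ x : K, ∃ a b : F, x = algebraMap F K a + algebraMap F K b * s)
    (n : ℕ) (dseq : Fin n → F) (X : Matrix (Fin n) (Fin n) K) (hX : IsUnit X.det)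
    (hXX : (X.map σ)ᵀ * X = Matrix.diagonal fun i => algebraMap F K (dseq i)) :
    (∀ i, IsSumSq (dseq i)) ∧
      ∃ z : K, z ≠ 0 ∧ σ z * z = algebraMap F K (∏ i, dseq i) := by
  have hnorm := exists_isSumSq_conj_mul_eq_algebraMap σ hdneg hs hσs hgen
  refine ⟨fun i ↦ isSumSq_of_algebraMap_eq_sum_conj_mul σ (algebraMap F K).injective hnorm
    (fun j ↦ X j i) ?_, X.det, hX.ne_zero, ?_⟩
  · simpa [mul_apply] using (congrFun (congrFun hXX i) i).symm
  · rw [← det_map_transpose_mul, hXX, det_diagonal, map_prod]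

/-- forward implication: let `R` be a real closed field,
`F ∈ {R, R(X), R(X,Y)}`, `d ∈ F*` negative (`−d` a nonzero sum of squares, "positive"),
`K = F(√d)`, and `D = diag(d₁,…,dₙ) ∈ GL(n,F)`. If some `X ∈ GL(n,K)` satisfies
`X*X = D`, then each `dᵢ` is positive (a nonzero sum of squares) and
`d₁⋯dₙ ∈ N(K*)`. -/
theorem stmt16 (R : Type*) [Field R] [LinearOrder R] [IsStrictOrderedRing R]
    (hRsq : ∀ x : R, 0 ≤ x → IsSquare x)
    (hRodd : ∀ p : Polynomial R, Odd p.natDegree → ∃ x, Polynomial.eval x p = 0)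
    (F : Type*) [Field F]
    (hF : Nonempty (F ≃+* R) ∨ Nonempty (F ≃+* RatFunc R) ∨
      Nonempty (F ≃+* RatFunc (RatFunc R)))
    (K : Type*) [Field K] [Algebra F K]
    (σ : K ≃ₐ[F] K) (hσinv : ∀ x, σ (σ x) = x)
    (hfix : ∀ x : K, σ x = x ↔ ∃ y : F, algebraMap F K y = x)
    (d : F) (hd0 : d ≠ 0) (hdneg : IsSumSq (-d)) (hd : ¬ IsSquare d)
    (s : K) (hs : s * s = algebraMap F K d) (hσs : σ s = -s)
    (hgen : ∀ x : K, ∃ a b : F, x = algebraMap F K a + algebraMap F K b * s)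
    (n : ℕ) (dseq : Fin n → F) (hdnz : ∀ i, dseq i ≠ 0)
    (X : Matrix (Fin n) (Fin n) K) (hX : IsUnit X.det)
    (hXX : (X.map σ)ᵀ * X = Matrix.diagonal fun i => algebraMap F K (dseq i)) :
    (∀ i, IsSumSq (dseq i)) ∧
      ∃ z : K, z ≠ 0 ∧ σ z * z = algebraMap F K (∏ i, dseq i) :=
  stmt16_general F K σ d hdneg s hs hσs hgen n dseq X hX hXX
end

section
/- Let F be a field of characteristic zero, K = F(√d) a quadratic extension, and let 𝔤 = su(n,F,d) = {A ∈ sl(n,K) : Ā ᵀ + A = 0}, viewed as an F-Lie subalgebra of sl(n,K). Then 𝔤 is an F-Lie algebra, the subspace 𝔤₋ of matrices in sl(n,K) that are upper triangular with diagonal entries in F is an F-Lie subalgebra, 𝔤 ∩ 𝔤₋ = 0, and sl(n,K) = 𝔤 ⊕ 𝔤₋ as F-vector spaces. -/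
open Matrix

/-- Membership in `su(n,F,d)`: trace zero and `Āᵀ + A = 0`. -/
def memSU {F K : Type*} [Field F] [Field K] [Algebra F K] (σ : K ≃ₐ[F] K) {n : ℕ}
    (A : Matrix (Fin n) (Fin n) K) : Prop :=
  A.trace = 0 ∧ (A.map σ)ᵀ + A = 0

/-- Membership in `𝔤₋`: trace zero, upper triangular, with diagonal entries in `F`. -/
def memGm (F : Type*) {K : Type*} [Field F] [Field K] [Algebra F K] {n : ℕ}
    (A : Matrix (Fin n) (Fin n) K) : Prop :=
  A.trace = 0 ∧ (∀ i, ∃ f : F, algebraMap F K f = A i i) ∧ ∀ i j, j < i → A i j = 0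

/-- `𝔤 = su(n,F,d)` is an `F`-Lie subalgebra of `sl(n,K)`, `𝔤₋` (upper
triangular, trace zero, `F`-diagonal) is an `F`-Lie subalgebra, `𝔤 ∩ 𝔤₋ = 0`, and
`sl(n,K) = 𝔤 ⊕ 𝔤₋` as `F`-vector spaces. -/
theorem stmt17 (F K : Type*) [Field F] [Field K] [CharZero F] [Algebra F K]
    (σ : K ≃ₐ[F] K) (hσinv : ∀ x, σ (σ x) = x)
    (hfix : ∀ x : K, σ x = x ↔ ∃ y : F, algebraMap F K y = x)
    (d : F) (hd0 : d ≠ 0) (hd : ¬ IsSquare d)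
    (s : K) (hs : s * s = algebraMap F K d) (hσs : σ s = -s)
    (hgen : ∀ x : K, ∃ a b : F, x = algebraMap F K a + algebraMap F K b * s)
    (n : ℕ) :
    (memSU σ (0 : Matrix (Fin n) (Fin n) K) ∧
      (∀ A B : Matrix (Fin n) (Fin n) K, memSU σ A → memSU σ B → memSU σ (A + B)) ∧
      (∀ (c : F) (A : Matrix (Fin n) (Fin n) K), memSU σ A → memSU σ (c • A)) ∧
      (∀ A B : Matrix (Fin n) (Fin n) K, memSU σ A → memSU σ B → memSU σ (A * B - B * A))) ∧
    (memGm F (0 : Matrix (Fin n) (Fin n) K) ∧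
      (∀ A B : Matrix (Fin n) (Fin n) K, memGm F A → memGm F B → memGm F (A + B)) ∧
      (∀ (c : F) (A : Matrix (Fin n) (Fin n) K), memGm F A → memGm F (c • A)) ∧
      (∀ A B : Matrix (Fin n) (Fin n) K, memGm F A → memGm F B → memGm F (A * B - B * A))) ∧
    (∀ A : Matrix (Fin n) (Fin n) K, memSU σ A → memGm F A → A = 0) ∧
    (∀ A : Matrix (Fin n) (Fin n) K, A.trace = 0 →
      ∃ B C : Matrix (Fin n) (Fin n) K, memSU σ B ∧ memGm F C ∧ A = B + C) := by
  have halg : Function.Injective (algebraMap F K) := (algebraMap F K).injective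
  have hKchar : CharZero K := charZero_of_injective_algebraMap halg
  have hs0 : s ≠ 0 := by
    intro h
    apply hd0
    apply halg
    rw [map_zero, ← hs, h, mul_zero]
  -- linear independence of 1, s over F
  have key : ∀ x y : F, algebraMap F K x + algebraMap F K y * s = 0 → x = 0 ∧ y = 0 := by
    intro x y h
    have h2 : algebraMap F K x - algebraMap F K y * s = 0 := by
      have := congrArg σ h
      simpa [map_add, _root_.map_mul, hσs, AlgEquiv.commutes, sub_eq_add_neg] using this
    have hx : algebraMap F K x = 0 := by
      have h3 : (2 : K) * algebraMap F K x = 0 := by linear_combination h + h2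
      rcases mul_eq_zero.1 h3 with h4 | h4
      · exact absurd h4 two_ne_zero
      · exact h4
    have hxx : x = 0 := by apply halg; rw [hx, map_zero]
    refine ⟨hxx, ?_⟩
    have hy : algebraMap F K y * s = 0 := by rw [hx, zero_add] at h; exact h
    rcases mul_eq_zero.1 hy with h4 | h4
    · apply halg; rw [h4, map_zero]
    · exact absurd h4 hs0
  -- entrywise characterization of the su-condition
  have entry : ∀ A : Matrix (Fin n) (Fin n) K,
      ((A.map σ)ᵀ + A = 0) ↔ ∀ i j, σ (A j i) + A i j = 0 := by
    intro A
    constructor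
    · intro h i j
      have := congrFun (congrFun h i) j
      simpa [Matrix.add_apply, Matrix.transpose_apply, Matrix.map_apply] using this
    · intro h
      ext i j
      simpa [Matrix.add_apply, Matrix.transpose_apply, Matrix.map_apply] using h i j
  refine ⟨⟨?_, ?_, ?_, ?_⟩, ⟨?_, ?_, ?_, ?_⟩, ?_, ?_⟩
  -- su contains 0
  · exact ⟨by simp, by simp⟩
  -- su addition
  · rintro A B ⟨hA1, hA2⟩ ⟨hB1, hB2⟩
    refine ⟨by simp [Matrix.trace_add, hA1, hB1], (entry _).2 fun i j => ?_⟩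
    have h1 := (entry A).1 hA2 i j
    have h2 := (entry B).1 hB2 i j
    simp only [Matrix.add_apply, map_add]
    linear_combination h1 + h2
  -- su smul
  · rintro c A ⟨hA1, hA2⟩
    refine ⟨by simp [Matrix.trace_smul, hA1], (entry _).2 fun i j => ?_⟩
    have h1 := (entry A).1 hA2 i j
    simp only [Matrix.smul_apply, Algebra.smul_def, _root_.map_mul, AlgEquiv.commutes]
    linear_combination algebraMap F K c * h1
  -- su bracket
  · rintro A B ⟨hA1, hA2⟩ ⟨hB1, hB2⟩
    constructor
    · rw [Matrix.trace_sub, Matrix.trace_mul_comm, sub_self]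
    · have hA' : (A.map σ)ᵀ = -A := eq_neg_of_add_eq_zero_left hA2
      have hB' : (B.map σ)ᵀ = -B := eq_neg_of_add_eq_zero_left hB2
      have hmap : ∀ M : Matrix (Fin n) (Fin n) K, M.map ⇑σ = σ.mapMatrix M := fun M => rfl
      have : ((A * B - B * A).map ⇑σ)ᵀ = B * A - A * B := by
        rw [hmap, _root_.map_sub, _root_.map_mul, _root_.map_mul, Matrix.transpose_sub, Matrix.transpose_mul,
          Matrix.transpose_mul, ← hmap, ← hmap, hA', hB']
        simp [mul_neg, neg_mul]
      rw [this]
      abel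
  -- gm contains 0
  · exact ⟨by simp, fun i => ⟨0, by simp⟩, fun i j _ => rfl⟩
  -- gm addition
  · rintro A B ⟨hA1, hA2, hA3⟩ ⟨hB1, hB2, hB3⟩
    refine ⟨by simp [Matrix.trace_add, hA1, hB1], fun i => ?_, fun i j hij => ?_⟩
    · obtain ⟨f, hf⟩ := hA2 i
      obtain ⟨g, hg⟩ := hB2 i
      exact ⟨f + g, by simp [map_add, hf, hg]⟩
    · simp [Matrix.add_apply, hA3 i j hij, hB3 i j hij]
  -- gm smul
  · rintro c A ⟨hA1, hA2, hA3⟩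
    refine ⟨by simp [Matrix.trace_smul, hA1], fun i => ?_, fun i j hij => ?_⟩
    · obtain ⟨f, hf⟩ := hA2 i
      exact ⟨c * f, by simp [_root_.map_mul, hf, Matrix.smul_apply, Algebra.smul_def]⟩
    · simp [Matrix.smul_apply, hA3 i j hij]
  -- gm bracket
  · rintro A B ⟨hA1, hA2, hA3⟩ ⟨hB1, hB2, hB3⟩
    have hlow : ∀ (M N : Matrix (Fin n) (Fin n) K),
        (∀ i j, j < i → M i j = 0) → (∀ i j, j < i → N i j = 0) →
        ∀ i j, j < i → (M * N) i j = 0 := by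
      intro M N hM hN i j hij
      rw [Matrix.mul_apply]
      apply Finset.sum_eq_zero
      intro k _
      rcases lt_or_ge k i with h | h
      · rw [hM i k h, zero_mul]
      · rw [hN k j (lt_of_lt_of_le hij h), mul_zero]
    have hdiag : ∀ (M N : Matrix (Fin n) (Fin n) K),
        (∀ i j, j < i → M i j = 0) → (∀ i j, j < i → N i j = 0) →
        ∀ i, (M * N) i i = M i i * N i i := by
      intro M N hM hN i
      rw [Matrix.mul_apply]
      apply Finset.sum_eq_single
      · intro k _ hk
        rcases lt_or_gt_of_ne hk with h | h
        · rw [hM i k h, zero_mul]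
        · rw [hN k i h, mul_zero]
      · intro h; exact absurd (Finset.mem_univ i) h
    refine ⟨by rw [Matrix.trace_sub, Matrix.trace_mul_comm, sub_self], fun i => ?_,
      fun i j hij => ?_⟩
    · refine ⟨0, ?_⟩
      rw [map_zero, Matrix.sub_apply, hdiag A B hA3 hB3 i, hdiag B A hB3 hA3 i,
        mul_comm, sub_self]
    · rw [Matrix.sub_apply, hlow A B hA3 hB3 i j hij, hlow B A hB3 hA3 i j hij, sub_self]
  -- intersection is zero
  · rintro A ⟨hA1, hA2⟩ ⟨hB1, hB2, hB3⟩
    ext i j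
    rcases lt_trichotomy i j with h | h | h
    · have h1 := (entry A).1 hA2 i j
      rw [hB3 j i h, map_zero, zero_add] at h1
      simpa using h1
    · subst h
      obtain ⟨f, hf⟩ := hB2 i
      have h1 := (entry A).1 hA2 i i
      rw [← hf, AlgEquiv.commutes, ← map_add] at h1
      have : f + f = 0 := halg (by rw [h1, map_zero])
      have hf0 : f = 0 := by
        have h2 : (2 : F) * f = 0 := by linear_combination this
        rcases mul_eq_zero.1 h2 with h3 | h3
        · exact absurd h3 two_ne_zero
        · exact h3
      simp [← hf, hf0]
    · simpa using hB3 i j h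
  -- decomposition
  · intro A hA
    choose a b hab using fun i => hgen (A i i)
    set B : Matrix (Fin n) (Fin n) K := Matrix.of fun i j =>
      if i = j then algebraMap F K (b i) * s else if j < i then A i j else -σ (A j i) with hB
    have hBij : ∀ i j, B i j =
        if i = j then algebraMap F K (b i) * s else if j < i then A i j else -σ (A j i) :=
      fun i j => rfl
    -- trace computations
    have htrA : algebraMap F K (∑ i, a i) + algebraMap F K (∑ i, b i) * s = 0 := by
      rw [← hA, Matrix.trace]
      simp only [Matrix.diag_apply, map_sum, Finset.sum_mul, ← Finset.sum_add_distrib]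
      exact Finset.sum_congr rfl fun i _ => (hab i).symm
    obtain ⟨hsa, hsb⟩ := key _ _ htrA
    have hBii : ∀ i, B i i = algebraMap F K (b i) * s := fun i => by
      rw [hBij, if_pos rfl]
    have htrB : B.trace = 0 := by
      rw [Matrix.trace]
      simp only [Matrix.diag_apply]
      rw [Finset.sum_congr rfl fun i _ => hBii i,
        ← Finset.sum_mul, ← map_sum, hsb, map_zero, zero_mul]
    refine ⟨B, A - B, ⟨htrB, (entry _).2 fun i j => ?_⟩, ⟨?_, fun i => ?_, fun i j hij => ?_⟩,
      by abel⟩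
    · rcases lt_trichotomy i j with h | h | h
      · rw [hBij i j, hBij j i, if_neg h.ne, if_neg (not_lt_of_gt h),
          if_neg h.ne', if_pos h]
        abel
      · subst h
        rw [hBij i i, if_pos rfl, _root_.map_mul, AlgEquiv.commutes, hσs]
        ring
      · rw [hBij i j, hBij j i, if_neg h.ne', if_pos h,
          if_neg h.ne, if_neg (not_lt_of_gt h), _root_.map_neg, hσinv]
        abel
    · rw [Matrix.trace_sub, hA, htrB, sub_self]
    · refine ⟨a i, ?_⟩
      rw [Matrix.sub_apply, hBii i, hab i]
      ring
    · rw [Matrix.sub_apply, hBij i j, if_neg (ne_of_gt hij), if_pos hij, sub_self]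
end

section
/- Let F be a field of characteristic zero, K = F(√d), and define the F-bilinear form on sl(n,K) by ⟨A + √d·B, C + √d·D⟩ = 2n·tr(AD + BC) for A,B,C,D ∈ su(n,F,d) (equivalently, ⟨X,Y⟩ is the √d-coefficient of the Killing form κ(X,Y) = 2n·tr(XY)). Then this form is nondegenerate on sl(n,K) as an F-vector space, and both su(n,F,d) and the subalgebra 𝔤₋ of upper triangular matrices with F-diagonal are totally isotropic; hence (sl(n,K), su(n,F,d), 𝔤₋) is a Manin triple over F. -/
open Matrix

/-- the `F`-bilinear form `⟨X,Y⟩` = `√d`-coefficient of `2n·tr(XY)` is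
nondegenerate on `sl(n,K)` as an `F`-vector space, and both `su(n,F,d)` and `𝔤₋` are
totally isotropic Lie subalgebras complementary over `F`; hence
`(sl(n,K), su(n,F,d), 𝔤₋)` is a Manin triple over `F`. Here `co x = (a,b)` gives the
coordinates `x = a + b√d` of `x ∈ K`. -/
theorem stmt18 (F K : Type*) [Field F] [Field K] [CharZero F] [Algebra F K]
    (σ : K ≃ₐ[F] K) (hσinv : ∀ x, σ (σ x) = x)
    (hfix : ∀ x : K, σ x = x ↔ ∃ y : F, algebraMap F K y = x)
    (d : F) (hd0 : d ≠ 0) (hd : ¬ IsSquare d)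
    (s : K) (hs : s * s = algebraMap F K d) (hσs : σ s = -s)
    (co : K → F × F)
    (hco : ∀ x : K, x = algebraMap F K (co x).1 + algebraMap F K (co x).2 * s)
    (n : ℕ) :
    letI B : Matrix (Fin n) (Fin n) K → Matrix (Fin n) (Fin n) K → F :=
      fun X Y => (co (algebraMap F K (2 * n) * (X * Y).trace)).2
    -- nondegeneracy on sl(n,K)
    (∀ X : Matrix (Fin n) (Fin n) K, X.trace = 0 →
      (∀ Y : Matrix (Fin n) (Fin n) K, Y.trace = 0 → B X Y = 0) → X = 0) ∧
    -- both subalgebras are totally isotropic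
    (∀ X Y : Matrix (Fin n) (Fin n) K, memSU σ X → memSU σ Y → B X Y = 0) ∧
    (∀ X Y : Matrix (Fin n) (Fin n) K, memGm F X → memGm F Y → B X Y = 0) ∧
    -- they are Lie subalgebras and complementary: Manin triple
    (∀ A C : Matrix (Fin n) (Fin n) K, memSU σ A → memSU σ C → memSU σ (A * C - C * A)) ∧
    (∀ A C : Matrix (Fin n) (Fin n) K, memGm F A → memGm F C → memGm F (A * C - C * A)) ∧
    (∀ A : Matrix (Fin n) (Fin n) K, memSU σ A → memGm F A → A = 0) ∧
    (∀ A : Matrix (Fin n) (Fin n) K, A.trace = 0 →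
      ∃ X Y : Matrix (Fin n) (Fin n) K, memSU σ X ∧ memGm F Y ∧ A = X + Y) := by
  haveI : CharZero K := charZero_of_injective_algebraMap (algebraMap F K).injective
  have hs0 : s ≠ 0 := by
    intro h
    apply hd0
    have : algebraMap F K d = 0 := by rw [← hs, h, mul_zero]
    exact (map_eq_zero _).mp this
  have hbs : ∀ b : F, (2 : K) * (algebraMap F K b * s) = 0 → b = 0 := by
    intro b h
    rcases mul_eq_zero.mp h with h' | h'
    · exact absurd h' two_ne_zero
    · rcases mul_eq_zero.mp h' with h'' | h''
      · exact (map_eq_zero _).mp h''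
      · exact absurd h'' hs0
  have huniq : ∀ a b : F, algebraMap F K a + algebraMap F K b * s = 0 → a = 0 ∧ b = 0 := by
    intro a b h
    have h2 : algebraMap F K a - algebraMap F K b * s = 0 := by
      have hσh := congrArg σ h
      rw [map_add, _root_.map_mul, AlgEquiv.commutes, AlgEquiv.commutes, hσs, map_zero] at hσh
      linear_combination hσh
    have hb : b = 0 := hbs b (by linear_combination h - h2)
    refine ⟨?_, hb⟩
    rw [hb] at h
    simpa using (map_eq_zero (algebraMap F K)).mp (by simpa using h)
  have hcoeq : ∀ (x : K) (a b : F), x = algebraMap F K a + algebraMap F K b * s →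
      co x = (a, b) := by
    intro x a b h
    have h0 : algebraMap F K ((co x).1 - a) + algebraMap F K ((co x).2 - b) * s = 0 := by
      rw [map_sub, map_sub]
      linear_combination (hco x).symm + h
    obtain ⟨h1, h2⟩ := huniq _ _ h0
    rw [Prod.ext_iff]
    exact ⟨sub_eq_zero.mp h1, sub_eq_zero.mp h2⟩
  have hfix2 : ∀ x : K, σ x = x → (co x).2 = 0 := by
    intro x hx
    have hσx : x = algebraMap F K (co x).1 - algebraMap F K (co x).2 * s := by
      have h := congrArg σ (hco x)
      rw [hx, map_add, _root_.map_mul, AlgEquiv.commutes, AlgEquiv.commutes, hσs] at h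
      linear_combination h
    exact hbs _ (by linear_combination hσx - hco x)
  have hBfix : ∀ t : K, σ t = t → (co (algebraMap F K (2 * n) * t)).2 = 0 := by
    intro t ht
    exact hfix2 _ (by rw [_root_.map_mul, AlgEquiv.commutes, ht])
  have htr : ∀ M N : Matrix (Fin n) (Fin n) K,
      (M * N).trace = ∑ i, ∑ j, M i j * N j i := by
    intro M N
    simp [Matrix.trace, Matrix.mul_apply, Matrix.diag]
  have hsue : ∀ A : Matrix (Fin n) (Fin n) K, (A.map σ)ᵀ + A = 0 →
      ∀ i j, σ (A i j) = -A j i := by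
    intro A hA i j
    have h := congrFun (congrFun hA j) i
    simp only [Matrix.add_apply, Matrix.transpose_apply, Matrix.map_apply,
      Matrix.zero_apply] at h
    linear_combination h
  refine ⟨?_, ?_, ?_, ?_, ?_, ?_, ?_⟩
  · -- nondegeneracy
    intro X hX h
    by_contra hne
    obtain ⟨i, j, hXij⟩ : ∃ i j, X i j ≠ 0 := by
      by_contra hc
      push_neg at hc
      exact hne (by ext i j; simpa using hc i j)
    have hn0 : (n : F) ≠ 0 := Nat.cast_ne_zero.mpr i.pos.ne'
    have h2n : (2 * (n : F)) ≠ 0 := mul_ne_zero two_ne_zero hn0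
    have hkey : ∀ z : K, z ≠ 0 →
        ∃ c : K, (co (algebraMap F K (2 * ↑n) * (c * z))).2 ≠ 0 := by
      intro z hz
      have hw : algebraMap F K (2 * ↑n) * z ≠ 0 :=
        mul_ne_zero ((map_ne_zero _).mpr h2n) hz
      set w := algebraMap F K (2 * ↑n) * z with hwdef
      by_cases hb : (co w).2 = 0
      · refine ⟨s, ?_⟩
        have hwa : w = algebraMap F K (co w).1 := by
          have := hco w
          rw [hb, map_zero, zero_mul, add_zero] at this
          exact this
        have ha : (co w).1 ≠ 0 := by
          intro h0
          exact hw (by rw [hwa, h0, map_zero])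
        have heq : algebraMap F K (2 * ↑n) * (s * z)
            = algebraMap F K 0 + algebraMap F K (co w).1 * s := by
          rw [map_zero, zero_add]
          linear_combination s * hwa
        rw [hcoeq _ _ _ heq]
        exact ha
      · exact ⟨1, by rw [one_mul]; exact hb⟩
    have hstd : ∀ (p q : Fin n) (c : K),
        (X * Matrix.of fun k l => if k = p ∧ l = q then c else 0).trace = X q p * c := by
      intro p q c
      rw [htr]
      have e : ∀ k l : Fin n,
          X k l * (Matrix.of fun k l => if k = p ∧ l = q then c else 0) l k
          = if k = q then (if l = p then X k l * c else 0) else 0 := by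
        intro k l
        simp only [Matrix.of_apply, mul_ite, mul_zero, ite_and]
        by_cases h1 : l = p <;> by_cases h2 : k = q <;> simp [h1, h2]
      simp only [e]
      simp [Finset.sum_ite_eq', Finset.sum_ite_eq]
    have hstdtr : ∀ (p q : Fin n) (c : K),
        (Matrix.of fun k l => if k = p ∧ l = q then c else 0).trace
        = if p = q then c else 0 := by
      intro p q c
      unfold Matrix.trace
      have e : ∀ k : Fin n, (Matrix.of fun k l => if k = p ∧ l = q then c else 0).diag k
          = if k = p ∧ p = q then c else 0 := by
        intro k
        simp only [Matrix.diag, Matrix.of_apply]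
        by_cases h1 : k = p
        · subst h1; rfl
        · simp [h1]
      rw [Finset.sum_congr rfl fun k _ => e k]
      by_cases h2 : p = q
      · simp [h2, Finset.sum_ite_eq']
      · simp [h2]
    by_cases hoff : ∃ i j, i ≠ j ∧ X i j ≠ 0
    · obtain ⟨i, j, hij, hXij⟩ := hoff
      obtain ⟨c, hc⟩ := hkey (X i j) hXij
      set Y : Matrix (Fin n) (Fin n) K :=
        Matrix.of fun k l => if k = j ∧ l = i then c else 0 with hY
      have htrY : Y.trace = 0 := by
        rw [hstdtr, if_neg (fun h' => hij h'.symm)]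
      have hBXY : (co (algebraMap F K (2 * ↑n) * (X * Y).trace)).2 = 0 := h Y htrY
      rw [hstd j i c, mul_comm (X i j) c] at hBXY
      exact hc hBXY
    · push_neg at hoff
      have hii : X i i ≠ 0 := by
        by_cases h' : i = j
        · subst h'; exact hXij
        · exact absurd (hoff i j h') hXij
      obtain ⟨p, hp⟩ : ∃ p, X p p ≠ X i i := by
        by_contra hc
        push_neg at hc
        have htrn : X.trace = (n : K) * X i i := by
          have e0 : X.trace = ∑ k, X k k := rfl
          rw [e0, Finset.sum_congr rfl fun k _ => hc k]
          simp [Finset.sum_const, Finset.card_univ, nsmul_eq_mul]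
        rw [hX] at htrn
        have hn : (n : K) ≠ 0 := Nat.cast_ne_zero.mpr i.pos.ne'
        exact hii ((mul_eq_zero.mp htrn.symm).resolve_left hn)
      have hip : i ≠ p := fun h' => hp (by rw [← h'])
      have hz : X i i - X p p ≠ 0 := sub_ne_zero.mpr (Ne.symm hp)
      obtain ⟨c, hc⟩ := hkey _ hz
      set Y : Matrix (Fin n) (Fin n) K :=
        (Matrix.of fun k l => if k = i ∧ l = i then c else 0)
        + (Matrix.of fun k l => if k = p ∧ l = p then -c else 0) with hY
      have htrY : Y.trace = 0 := by
        rw [hY, Matrix.trace_add, hstdtr, hstdtr, if_pos rfl, if_pos rfl, add_neg_cancel]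
      have htrXY : (X * Y).trace = c * (X i i - X p p) := by
        rw [hY, Matrix.mul_add, Matrix.trace_add, hstd, hstd]
        ring
      have hBXY : (co (algebraMap F K (2 * ↑n) * (X * Y).trace)).2 = 0 := h Y htrY
      rw [htrXY] at hBXY
      exact hc hBXY
  · -- su isotropic
    rintro X Y ⟨-, hX⟩ ⟨-, hY⟩
    apply hBfix
    rw [htr, map_sum]
    rw [Finset.sum_comm]
    refine Finset.sum_congr rfl fun i _ => ?_
    rw [map_sum]
    refine Finset.sum_congr rfl fun j _ => ?_
    rw [_root_.map_mul, hsue X hX, hsue Y hY]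
    ring
  · -- gm isotropic
    rintro X Y ⟨-, hXd, hXl⟩ ⟨-, hYd, hYl⟩
    apply hBfix
    rw [htr, map_sum]
    refine Finset.sum_congr rfl fun i _ => ?_
    rw [map_sum]
    refine Finset.sum_congr rfl fun j _ => ?_
    rcases lt_trichotomy i j with h | h | h
    · rw [(hYl j i h), mul_zero, map_zero]
    · subst h
      obtain ⟨f, hf⟩ := hXd i
      obtain ⟨g, hg⟩ := hYd i
      rw [← hf, ← hg, _root_.map_mul, AlgEquiv.commutes, AlgEquiv.commutes]
    · rw [(hXl i j h), zero_mul, map_zero]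
  · -- su Lie closure
    rintro A C ⟨-, hA⟩ ⟨-, hC⟩
    constructor
    · rw [Matrix.trace_sub, Matrix.trace_mul_comm, sub_self]
    · ext i j
      simp only [Matrix.add_apply, Matrix.transpose_apply, Matrix.map_apply,
        Matrix.sub_apply, Matrix.zero_apply, Matrix.mul_apply, map_sub, map_sum,
        _root_.map_mul]
      have e1 : ∀ k, σ (A j k) * σ (C k i) = C i k * A k j := by
        intro k; rw [hsue A hA, hsue C hC]; ring
      have e2 : ∀ k, σ (C j k) * σ (A k i) = A i k * C k j := by
        intro k; rw [hsue C hC, hsue A hA]; ring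
      simp only [e1, e2]
      ring
  · -- gm Lie closure
    rintro A C ⟨-, hAd, hAl⟩ ⟨-, hCd, hCl⟩
    have hmul : ∀ (M N : Matrix (Fin n) (Fin n) K), (∀ i j, j < i → M i j = 0) →
        (∀ i j, j < i → N i j = 0) → ∀ i j, j ≤ i → (M * N) i j = M i j * N j j := by
      intro M N hM hN i j hij
      rw [Matrix.mul_apply]
      rw [Finset.sum_eq_single j]
      · intro k _ hk
        rcases lt_or_ge j k with h | h
        · rw [hN k j h, mul_zero]
        · rw [hM i k (lt_of_lt_of_le (lt_of_le_of_ne h hk) hij), zero_mul]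
      · intro h; exact absurd (Finset.mem_univ j) h
    refine ⟨?_, ?_, ?_⟩
    · rw [Matrix.trace_sub, Matrix.trace_mul_comm, sub_self]
    · intro i
      refine ⟨0, ?_⟩
      rw [map_zero, Matrix.sub_apply, hmul A C hAl hCl i i le_rfl,
        hmul C A hCl hAl i i le_rfl]
      ring
    · intro i j hij
      rw [Matrix.sub_apply, hmul A C hAl hCl i j (le_of_lt hij),
        hmul C A hCl hAl i j (le_of_lt hij), hAl i j hij, hCl i j hij]
      ring
  · -- intersection zero
    rintro A ⟨-, hA⟩ ⟨-, hAd, hAl⟩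
    ext i j
    have h := congrFun (congrFun hA i) j
    simp only [Matrix.add_apply, Matrix.transpose_apply, Matrix.map_apply,
      Matrix.zero_apply] at h
    rcases lt_trichotomy i j with hij | hij | hij
    · rw [hAl j i hij, map_zero, zero_add] at h
      simpa using h
    · subst hij
      obtain ⟨f, hf⟩ := hAd i
      rw [← hf, AlgEquiv.commutes] at h
      have : (2 : K) * algebraMap F K f = 0 := by linear_combination h
      rcases mul_eq_zero.mp this with h' | h'
      · exact absurd h' two_ne_zero
      · simp [← hf, h']
    · simp [hAl i j hij]
  · -- decomposition
    rintro A hA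
    set X : Matrix (Fin n) (Fin n) K := Matrix.of fun i j =>
      if i < j then -σ (A j i) else if j < i then A i j
      else algebraMap F K (co (A i i)).2 * s with hXdef
    have hXe : ∀ i j, X i j = if i < j then -σ (A j i) else if j < i then A i j
        else algebraMap F K (co (A i i)).2 * s := fun i j => rfl
    -- trace of X
    have hsum : (∑ i, (co (A i i)).1) = 0 ∧ (∑ i, (co (A i i)).2) = 0 := by
      apply huniq
      rw [map_sum, map_sum, Finset.sum_mul, ← Finset.sum_add_distrib]
      rw [← hA]
      unfold Matrix.trace
      exact (Finset.sum_congr rfl fun i _ => (hco (A i i)).symm)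
    have htrX : X.trace = 0 := by
      unfold Matrix.trace
      have : ∀ i : Fin n, X.diag i = algebraMap F K ((co (A i i)).2) * s := by
        intro i
        simp [Matrix.diag, hXe, lt_irrefl]
      rw [Finset.sum_congr rfl fun i _ => this i, ← Finset.sum_mul, ← map_sum,
        hsum.2, map_zero, zero_mul]
    refine ⟨X, A - X, ⟨htrX, ?_⟩, ⟨?_, ?_, ?_⟩, by abel⟩
    · -- skew
      ext i j
      simp only [Matrix.add_apply, Matrix.transpose_apply, Matrix.map_apply,
        Matrix.zero_apply]
      rcases lt_trichotomy i j with hij | hij | hij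
      · rw [hXe j i, if_neg (asymm hij), if_pos hij, hXe i j, if_pos hij]
        ring
      · subst hij
        rw [hXe i i, if_neg (lt_irrefl i), if_neg (lt_irrefl i)]
        rw [_root_.map_mul, AlgEquiv.commutes, hσs]
        ring
      · rw [hXe j i, if_pos hij, hXe i j, if_neg (asymm hij), if_pos hij,
          map_neg, hσinv]
        ring
    · rw [Matrix.trace_sub, hA, htrX, sub_self]
    · intro i
      refine ⟨(co (A i i)).1, ?_⟩
      rw [Matrix.sub_apply, hXe i i, if_neg (lt_irrefl i), if_neg (lt_irrefl i)]
      linear_combination -hco (A i i)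
    · intro i j hij
      rw [Matrix.sub_apply, hXe i j, if_neg (asymm hij), if_pos hij, sub_self]
end
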